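/- Let S be the Snell envelope of an optional process L of class (D) on [0,T], i.e., S_α = ess sup_{τ ∈ T_α} E(L_τ | F_α) for every stopping time α ≤ T. Then for all stopping times α ≤ σ ≤ T with S nonnegative, S_α = ess sup_{τ ∈ T_{α,σ}} E(L_τ 1_{τ<σ} + S_σ 1_{τ=σ} | F_α). -/

import Mathlib

open MeasureTheory Filter Function Set
open scoped Topology ENNReal

noncomputable section

variable {Ω : Type*} {m0 : MeasurableSpace Ω}

/-- A process `X` is of class (D) on `[0,T]` if the family of its values at all stopping
times with values in `[0,T]` is uniformly integrable. -/
def ClassD (ℱ : Filtration ℝ m0) (μ : Measure Ω) (T : Ω → ℝ) (X : ℝ → Ω → ℝ) : Prop :=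
  UniformIntegrable
    (fun τ : {τ : Ω → ℝ // IsStoppingTime ℱ (fun ω => ((τ) ω : WithTop ℝ)) ∧ ∀ ω, τ ω ∈ Set.Icc 0 (T ω)} =>
      stoppedValue X (fun ω => ((τ.1) ω : WithTop ℝ))) 1 μ

/-- The norm `‖X‖₁ = sup_τ E|X_τ|`, supremum over stopping times with values in `[0,T]`. -/
def norm1 (ℱ : Filtration ℝ m0) (μ : Measure Ω) (T : Ω → ℝ) (X : ℝ → Ω → ℝ) : ℝ :=
  ⨆ τ : {τ : Ω → ℝ // IsStoppingTime ℱ (fun ω => ((τ) ω : WithTop ℝ)) ∧ ∀ ω, τ ω ∈ Set.Icc 0 (T ω)},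
    ∫ ω, |stoppedValue X (fun ω => ((τ.1) ω : WithTop ℝ)) ω| ∂μ

/-- `Z` is the essential supremum of the family `g i`. -/
def IsEssSupOf (μ : Measure Ω) {ι : Sort*} (g : ι → Ω → ℝ) (Z : Ω → ℝ) : Prop :=
  (∀ i, g i ≤ᵐ[μ] Z) ∧ ∀ W : Ω → ℝ, (∀ i, g i ≤ᵐ[μ] W) → Z ≤ᵐ[μ] W

/-- `Z` is the essential infimum of the family `g i`. -/
def IsEssInfOf (μ : Measure Ω) {ι : Sort*} (g : ι → Ω → ℝ) (Z : Ω → ℝ) : Prop :=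
  (∀ i, Z ≤ᵐ[μ] g i) ∧ ∀ W : Ω → ℝ, (∀ i, W ≤ᵐ[μ] g i) → W ≤ᵐ[μ] Z

/-- A local martingale: there is a localizing sequence of stopping times increasing to
`∞` such that each stopped process is a martingale. -/
def IsLocalMartingale (ℱ : Filtration ℝ m0) (μ : Measure Ω) (M : ℝ → Ω → ℝ) : Prop :=
  ∃ τ : ℕ → Ω → ℝ, (∀ n, IsStoppingTime ℱ (fun ω => ((τ n) ω : WithTop ℝ))) ∧ (∀ ω, Monotone fun n => τ n ω) ∧
    (∀ ω, Tendsto (fun n => τ n ω) atTop atTop) ∧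
    ∀ n, Martingale (MeasureTheory.stoppedProcess M (fun ω => ((τ n) ω : WithTop ℝ))) ℱ μ

/-- Each path of the process is a regulated function. -/
def RegulatedPaths (X : ℝ → Ω → ℝ) : Prop :=
  ∀ ω, ∀ t : ℝ, (∃ l : ℝ, Tendsto (fun s => X s ω) (𝓝[>] t) (𝓝 l)) ∧
    (∃ l : ℝ, Tendsto (fun s => X s ω) (𝓝[<] t) (𝓝 l))

/-- The right-jump `Δ⁺X_t = X_{t+} - X_t` of a path. -/
def rjump (X : ℝ → Ω → ℝ) (t : ℝ) (ω : Ω) : ℝ :=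
  Function.rightLim (fun s => X s ω) t - X t ω

/-- The purely right-jump part `X^d_t = Σ_{0 ≤ s < t} Δ⁺X_s` of a path. -/
def rjumpPart (X : ℝ → Ω → ℝ) (t : ℝ) (ω : Ω) : ℝ :=
  ∑' s : {s : ℝ // 0 ≤ s ∧ s < t}, rjump X s.1 ω

/-- Solution of the backward SDE `BSDE^T(ξ, f + dV)`:
`Y_t = Y_{T∧a} + ∫_t^{T∧a} f(r,Y_r) dr + ∫_t^{T∧a} dV_r - ∫_t^{T∧a} dM_r` on `[0,T∧a]`
for every `a ≥ 0`, with `Y_{T∧a} → ξ` a.s. -/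
structure BSDESolV (ℱ : Filtration ℝ m0) (μ : Measure Ω) (T : Ω → ℝ) (ξ : Ω → ℝ)
    (f : ℝ → Ω → ℝ → ℝ) (V : ℝ → Ω → ℝ) (Y M : ℝ → Ω → ℝ) : Prop where
  adaptedY : Adapted ℱ Y
  regY : RegulatedPaths Y
  locM : IsLocalMartingale ℱ μ M
  M0 : ∀ ω, M 0 ω = 0
  intf : ∀ ω, ∀ a : ℝ, IntervalIntegrable (fun r => f r ω (Y r ω)) volume 0 (min (T ω) a)
  dyn : ∀ ω, ∀ a : ℝ, ∀ t ∈ Set.Icc (0:ℝ) (min (T ω) a),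
      Y t ω = Y (min (T ω) a) ω + (∫ r in t..(min (T ω) a), f r ω (Y r ω))
        + (V (min (T ω) a) ω - V t ω) - (M (min (T ω) a) ω - M t ω)
  term : ∀ᵐ ω ∂μ, Tendsto (fun a : ℝ => Y (min (T ω) a) ω) atTop (𝓝 (ξ ω))

/-- Solution of `BSDE^T(ξ, f)` (no `dV`-part). -/
def BSDESol (ℱ : Filtration ℝ m0) (μ : Measure Ω) (T : Ω → ℝ) (ξ : Ω → ℝ)
    (f : ℝ → Ω → ℝ → ℝ) (Y M : ℝ → Ω → ℝ) : Prop :=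
  BSDESolV ℱ μ T ξ f (fun _ _ => 0) Y M

/-- Solution of the reflected BSDE `\underline{R}BSDE^T(ξ, f + dV, L)` with lower
barrier `L`.  `K` is the increasing reflecting process; `ν ω` is the measure `dK^*`
associated with the càdlàg part of `K`, through which the Skorokhod minimality
condition is expressed. -/
structure RBSDE1Sol (ℱ : Filtration ℝ m0) (μ : Measure Ω) (T : Ω → ℝ) (ξ : Ω → ℝ)
    (f : ℝ → Ω → ℝ → ℝ) (V : ℝ → Ω → ℝ) (L : ℝ → Ω → ℝ)
    (Y M K : ℝ → Ω → ℝ) (ν : Ω → Measure ℝ) : Prop where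
  adaptedY : Adapted ℱ Y
  regY : RegulatedPaths Y
  locM : IsLocalMartingale ℱ μ M
  M0 : ∀ ω, M 0 ω = 0
  adaptedK : Adapted ℱ K
  K0 : ∀ ω, K 0 ω = 0
  monoK : ∀ ω, Monotone fun t => K t ω
  barrier : ∀ᵐ ω ∂μ, ∀ t ∈ Set.Icc (0:ℝ) (T ω), L t ω ≤ Y t ω
  hν : ∀ ω, ∀ s t : ℝ, s ≤ t →
      (ν ω (Set.Ioc s t)).toReal
        = (K t ω - K s ω) - ∑' r : {r : ℝ // s ≤ r ∧ r < t}, rjump K r.1 ω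
  minimal : ∀ᵐ ω ∂μ, ∀ a : ℝ,
      (∫ r in Set.Ioc (0:ℝ) (min (T ω) a),
          (Function.leftLim (fun u => Y u ω) r - limsup (fun u => L u ω) (𝓝[<] r)) ∂(ν ω))
      + (∑' r : {r : ℝ // 0 ≤ r ∧ r < min (T ω) a},
          (Y r.1 ω - L r.1 ω) * rjump K r.1 ω) = 0
  intf : ∀ ω, ∀ a : ℝ, IntervalIntegrable (fun r => f r ω (Y r ω)) volume 0 (min (T ω) a)
  dyn : ∀ ω, ∀ a : ℝ, ∀ t ∈ Set.Icc (0:ℝ) (min (T ω) a),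
      Y t ω = Y (min (T ω) a) ω + (∫ r in t..(min (T ω) a), f r ω (Y r ω))
        + (V (min (T ω) a) ω - V t ω) + (K (min (T ω) a) ω - K t ω)
        - (M (min (T ω) a) ω - M t ω)
  term : ∀ᵐ ω ∂μ, Tendsto (fun a : ℝ => Y (min (T ω) a) ω) atTop (𝓝 (ξ ω))

/-- Solution of the reflected BSDE `RBSDE^T(ξ, f + dV, L, U)` with two barriers.
`Rp - Rm` is the Jordan decomposition of the reflecting process `R`; `νp ω`, `νm ω` are
the measures associated with the càdlàg parts of `Rp`, `Rm`. -/
structure RBSDE2Sol (ℱ : Filtration ℝ m0) (μ : Measure Ω) (T : Ω → ℝ) (ξ : Ω → ℝ)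
    (f : ℝ → Ω → ℝ → ℝ) (V : ℝ → Ω → ℝ) (L U : ℝ → Ω → ℝ)
    (Y M Rp Rm : ℝ → Ω → ℝ) (νp νm : Ω → Measure ℝ) : Prop where
  adaptedY : Adapted ℱ Y
  regY : RegulatedPaths Y
  locM : IsLocalMartingale ℱ μ M
  M0 : ∀ ω, M 0 ω = 0
  adaptedRp : Adapted ℱ Rp
  adaptedRm : Adapted ℱ Rm
  R0 : ∀ ω, Rp 0 ω = 0 ∧ Rm 0 ω = 0
  monoRp : ∀ ω, Monotone fun t => Rp t ω
  monoRm : ∀ ω, Monotone fun t => Rm t ω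
  barrier : ∀ᵐ ω ∂μ, ∀ t ∈ Set.Icc (0:ℝ) (T ω), L t ω ≤ Y t ω ∧ Y t ω ≤ U t ω
  hνp : ∀ ω, ∀ s t : ℝ, s ≤ t →
      (νp ω (Set.Ioc s t)).toReal
        = (Rp t ω - Rp s ω) - ∑' r : {r : ℝ // s ≤ r ∧ r < t}, rjump Rp r.1 ω
  hνm : ∀ ω, ∀ s t : ℝ, s ≤ t →
      (νm ω (Set.Ioc s t)).toReal
        = (Rm t ω - Rm s ω) - ∑' r : {r : ℝ // s ≤ r ∧ r < t}, rjump Rm r.1 ω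
  minimal : ∀ᵐ ω ∂μ, ∀ a : ℝ,
      (∫ r in Set.Ioc (0:ℝ) (min (T ω) a),
          (Function.leftLim (fun u => Y u ω) r - limsup (fun u => L u ω) (𝓝[<] r)) ∂(νp ω))
      + (∑' r : {r : ℝ // 0 ≤ r ∧ r < min (T ω) a},
          (Y r.1 ω - L r.1 ω) * rjump Rp r.1 ω)
      + (∫ r in Set.Ioc (0:ℝ) (min (T ω) a),
          (liminf (fun u => U u ω) (𝓝[<] r) - Function.leftLim (fun u => Y u ω) r) ∂(νm ω))
      + (∑' r : {r : ℝ // 0 ≤ r ∧ r < min (T ω) a},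
          (U r.1 ω - Y r.1 ω) * rjump Rm r.1 ω) = 0
  intf : ∀ ω, ∀ a : ℝ, IntervalIntegrable (fun r => f r ω (Y r ω)) volume 0 (min (T ω) a)
  dyn : ∀ ω, ∀ a : ℝ, ∀ t ∈ Set.Icc (0:ℝ) (min (T ω) a),
      Y t ω = Y (min (T ω) a) ω + (∫ r in t..(min (T ω) a), f r ω (Y r ω))
        + (V (min (T ω) a) ω - V t ω)
        + ((Rp (min (T ω) a) ω - Rm (min (T ω) a) ω) - (Rp t ω - Rm t ω))
        - (M (min (T ω) a) ω - M t ω)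
  term : ∀ᵐ ω ∂μ, Tendsto (fun a : ℝ => Y (min (T ω) a) ω) atTop (𝓝 (ξ ω))


section SnellHelpers

lemma isStoppingTime_ite' {ℱ : Filtration ℝ m0} {τ η : Ω → ℝ}
    (hτ : IsStoppingTime ℱ (fun ω => ((τ) ω : WithTop ℝ))) (hη : IsStoppingTime ℱ (fun ω => ((η) ω : WithTop ℝ)))
    {C : Set Ω} [∀ ω, Decidable (ω ∈ C)]
    (hC : MeasurableSet[hτ.measurableSpace] C)
    (hC' : MeasurableSet[hη.measurableSpace] Cᶜ) :
    IsStoppingTime ℱ (fun ω => ((if ω ∈ C then τ ω else η ω : ℝ) : WithTop ℝ)) := by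
  intro t
  have heq : {ω | ((if ω ∈ C then τ ω else η ω : ℝ) : WithTop ℝ) ≤ t}
      = (C ∩ {ω | (τ ω : WithTop ℝ) ≤ t}) ∪ (Cᶜ ∩ {ω | (η ω : WithTop ℝ) ≤ t}) := by
    ext ω; by_cases h : ω ∈ C <;> simp [h]
  rw [heq]
  exact (hC.2 t).union (hC'.2 t)

lemma condexp_le_of_monotone_limit {μ : Measure Ω} [IsProbabilityMeasure μ]
    {m : MeasurableSpace Ω} (hm : m ≤ m0)
    {f : ℕ → Ω → ℝ} {F Z : Ω → ℝ} (hf : ∀ n, Integrable (f n) μ) (hF : Integrable F μ)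
    (hmono : ∀ᵐ ω ∂μ, Monotone fun n => f n ω)
    (hlim : ∀ᵐ ω ∂μ, Tendsto (fun n => f n ω) atTop (𝓝 (F ω)))
    (hle : ∀ n, μ[f n|m] ≤ᵐ[μ] Z) : μ[F|m] ≤ᵐ[μ] Z := by
  have hfF : ∀ n, f n ≤ᵐ[μ] F := by
    intro n
    filter_upwards [hmono, hlim] with ω h1 h2 using h1.ge_of_tendsto h2 n
  set u : ℕ → Ω → ℝ := fun n => μ[f n|m] with hu
  set U : Ω → ℝ := μ[F|m] with hU
  have humeas : ∀ n, Measurable[m0] (u n) :=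
    fun n => (stronglyMeasurable_condExp.mono hm).measurable
  have hUmeas : Measurable[m0] U := (stronglyMeasurable_condExp.mono hm).measurable
  have huint : ∀ n, Integrable (u n) μ := fun n => integrable_condExp
  have hUint : Integrable U μ := integrable_condExp
  have humono : ∀ n, u n ≤ᵐ[μ] u (n + 1) := fun n =>
    condExp_mono (hf n) (hf (n + 1)) (hmono.mono fun ω h => h (Nat.le_succ n))
  have huU : ∀ n, u n ≤ᵐ[μ] U := fun n => condExp_mono (hf n) hF (hfF n)
  have haemono : ∀ᵐ ω ∂μ, Monotone fun n => u n ω := by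
    have h' : ∀ᵐ ω ∂μ, ∀ n, u n ω ≤ u (n + 1) ω := ae_all_iff.mpr humono
    filter_upwards [h'] with ω h using monotone_nat_of_le_succ h
  have haeU : ∀ᵐ ω ∂μ, ∀ n, u n ω ≤ U ω := ae_all_iff.mpr huU
  have haeZ : ∀ᵐ ω ∂μ, ∀ n, u n ω ≤ Z ω := ae_all_iff.mpr hle
  have hconv : ∀ᵐ ω ∂μ, ∃ l, Tendsto (fun n => u n ω) atTop (𝓝 l) := by
    filter_upwards [haemono, haeU] with ω h1 h2
    rcases tendsto_of_monotone h1 with h | h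
    · exfalso
      obtain ⟨n, hn⟩ := (h.eventually_gt_atTop (U ω)).exists
      exact absurd (h2 n) (not_le.mpr hn)
    · exact h
  have huaem : ∀ n, AEMeasurable (u n) μ := fun n => (humeas n).aemeasurable
  obtain ⟨ℓ, hℓmeas, hℓ⟩ := @measurable_limit_of_tendsto_metrizable_ae Ω ℝ m0 _ _ _ _ ℕ _ μ u atTop _ huaem hconv
  have hℓZ : ℓ ≤ᵐ[μ] Z := by
    filter_upwards [hℓ, haeZ] with ω h1 h2 using le_of_tendsto h1 (Eventually.of_forall h2)
  have huℓ : ∀ᵐ ω ∂μ, ∀ n, u n ω ≤ ℓ ω := by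
    filter_upwards [hℓ, haemono] with ω h1 h2 using h2.ge_of_tendsto h1
  -- integral convergence
  have hInt : Tendsto (fun n => ∫ ω, u n ω ∂μ) atTop (𝓝 (∫ ω, U ω ∂μ)) := by
    have h1 : ∀ n, ∫ ω, u n ω ∂μ = ∫ ω, f n ω ∂μ := fun n => integral_condExp hm
    have h2 : ∫ ω, U ω ∂μ = ∫ ω, F ω ∂μ := integral_condExp hm
    simp_rw [h1, h2]
    exact integral_tendsto_of_tendsto_of_monotone hf hF hmono hlim
  have hkey : ∫⁻ ω, ENNReal.ofReal (U ω - ℓ ω) ∂μ = 0 := by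
    have hb : ∀ n, ∫⁻ ω, ENNReal.ofReal (U ω - ℓ ω) ∂μ
        ≤ ENNReal.ofReal (∫ ω, U ω ∂μ - ∫ ω, u n ω ∂μ) := by
      intro n
      have h1 : ∫⁻ ω, ENNReal.ofReal (U ω - ℓ ω) ∂μ
          ≤ ∫⁻ ω, ENNReal.ofReal (U ω - u n ω) ∂μ := by
        refine lintegral_mono_ae ?_
        filter_upwards [huℓ] with ω h using ENNReal.ofReal_le_ofReal (by linarith [h n])
      have h2 : ENNReal.ofReal (∫ ω, (U ω - u n ω) ∂μ)
          = ∫⁻ ω, ENNReal.ofReal (U ω - u n ω) ∂μ :=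
        ofReal_integral_eq_lintegral_ofReal (hUint.sub (huint n))
          ((huU n).mono fun ω h => sub_nonneg.mpr h)
      rw [integral_sub hUint (huint n)] at h2
      rw [← h2] at h1
      exact h1
    have h0 : Tendsto (fun n => ENNReal.ofReal (∫ ω, U ω ∂μ - ∫ ω, u n ω ∂μ)) atTop (𝓝 0) := by
      have : Tendsto (fun n => ∫ ω, U ω ∂μ - ∫ ω, u n ω ∂μ) atTop (𝓝 0) := by
        have := hInt.const_sub (∫ ω, U ω ∂μ)
        simpa using this
      simpa [Function.comp_def] using (ENNReal.continuous_ofReal.tendsto 0).comp this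
    exact le_antisymm (ge_of_tendsto' h0 fun n => hb n) zero_le
  have hUℓ : U ≤ᵐ[μ] ℓ := by
    have := (lintegral_eq_zero_iff' ((hUmeas.sub hℓmeas).ennreal_ofReal.aemeasurable)).mp hkey
    filter_upwards [this] with ω h
    simpa [sub_nonpos] using ENNReal.ofReal_eq_zero.mp h
  exact hUℓ.trans hℓZ


lemma exists_monotone_seq_of_isEssSupOf {ι : Type*} [Nonempty ι] {μ : Measure Ω}
    [IsProbabilityMeasure μ] {g : ι → Ω → ℝ} {Z : Ω → ℝ}
    (hint : ∀ i, Integrable (g i) μ) (hgm : ∀ i, Measurable[m0] (g i))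
    (hdir : ∀ i j, ∃ k, g i ≤ᵐ[μ] g k ∧ g j ≤ᵐ[μ] g k)
    {c : ℝ} (hbdd : ∀ i, ∫ ω, g i ω ∂μ ≤ c)
    (hsup : IsEssSupOf μ g Z) :
    ∃ (e : ℕ → ι) (G : Ω → ℝ), Integrable G μ ∧ Z =ᵐ[μ] G ∧
      (∀ᵐ ω ∂μ, Monotone fun n => g (e n) ω) ∧
      (∀ᵐ ω ∂μ, Tendsto (fun n => g (e n) ω) atTop (𝓝 (Z ω))) := by
  classical
  set c₀ : ℝ := ⨆ i, ∫ ω, g i ω ∂μ with hc₀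
  have hbA : BddAbove (Set.range fun i => ∫ ω, g i ω ∂μ) := by
    refine ⟨c, ?_⟩; rintro x ⟨i, rfl⟩; exact hbdd i
  have hle_c₀ : ∀ i, ∫ ω, g i ω ∂μ ≤ c₀ := fun i => le_ciSup hbA i
  have hi0 : ∀ n : ℕ, ∃ i, c₀ - 1 / (n + 1) < ∫ ω, g i ω ∂μ := by
    intro n
    have h : c₀ - 1 / ((n : ℝ) + 1) < c₀ := by
      have h0 : (0:ℝ) < 1 / ((n : ℝ) + 1) := by positivity
      linarith
    exact exists_lt_of_lt_ciSup h
  choose i0 hi0' using hi0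
  choose k hk1 hk2 using hdir
  obtain ⟨e, he0, heS⟩ : ∃ e : ℕ → ι, e 0 = i0 0 ∧ ∀ n, e (n+1) = k (e n) (i0 (n+1)) :=
    ⟨fun n => Nat.rec (i0 0) (fun n en => k en (i0 (n+1))) n, rfl, fun _ => rfl⟩
  have hstep : ∀ n, g (e n) ≤ᵐ[μ] g (e (n+1)) := fun n => by rw [heS n]; exact hk1 _ _
  have hlow : ∀ n, g (i0 n) ≤ᵐ[μ] g (e n) := by
    intro n
    cases n with
    | zero => rw [he0]
    | succ n => rw [heS n]; exact hk2 _ _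
  have hub : ∀ n, g (e n) ≤ᵐ[μ] Z := fun n => hsup.1 _
  have hImono : ∀ n, ∫ ω, g (i0 n) ω ∂μ ≤ ∫ ω, g (e n) ω ∂μ :=
    fun n => integral_mono_ae (hint _) (hint _) (hlow n)
  have hItend : Tendsto (fun n => ∫ ω, g (e n) ω ∂μ) atTop (𝓝 c₀) := by
    refine tendsto_of_tendsto_of_tendsto_of_le_of_le
      (g := fun n : ℕ => c₀ - 1 / ((n : ℝ) + 1)) (h := fun _ => c₀) ?_ tendsto_const_nhds
      (fun n => ((hi0' n).trans_le (hImono n)).le) (fun n => hle_c₀ _)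
    have h1 : Tendsto (fun n : ℕ => 1 / ((n:ℝ)+1)) atTop (𝓝 0) :=
      tendsto_one_div_add_atTop_nhds_zero_nat
    simpa using (tendsto_const_nhds (x := c₀) (f := atTop)).sub h1
  have haemono : ∀ᵐ ω ∂μ, Monotone fun n => g (e n) ω := by
    have h' : ∀ᵐ ω ∂μ, ∀ n, g (e n) ω ≤ g (e (n+1)) ω := ae_all_iff.mpr hstep
    filter_upwards [h'] with ω h using monotone_nat_of_le_succ h
  have haeZ : ∀ᵐ ω ∂μ, ∀ n, g (e n) ω ≤ Z ω := ae_all_iff.mpr hub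
  have hconv : ∀ᵐ ω ∂μ, ∃ l, Tendsto (fun n => g (e n) ω) atTop (𝓝 l) := by
    filter_upwards [haemono, haeZ] with ω h1 h2
    rcases tendsto_of_monotone h1 with h | h
    · exfalso
      obtain ⟨n, hn⟩ := (h.eventually_gt_atTop (Z ω)).exists
      exact absurd (h2 n) (not_le.mpr hn)
    · exact h
  have haem : ∀ n : ℕ, AEMeasurable (fun ω => g (e n) ω) μ := fun n => (hgm _).aemeasurable
  obtain ⟨G, hGmeas, hGlim⟩ := @measurable_limit_of_tendsto_metrizable_ae Ω ℝ m0 _ _ _ _ ℕ _ μ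
    (fun n ω => g (e n) ω) atTop _ haem hconv
  have hGZ : G ≤ᵐ[μ] Z := by
    filter_upwards [hGlim, haeZ] with ω h1 h2 using le_of_tendsto h1 (Eventually.of_forall h2)
  have hGle : ∀ᵐ ω ∂μ, ∀ n, g (e n) ω ≤ G ω := by
    filter_upwards [hGlim, haemono] with ω h1 h2 using h2.ge_of_tendsto h1
  -- integrability of G
  have hGint : Integrable G μ := by
    have hnn : 0 ≤ᵐ[μ] fun ω => G ω - g (e 0) ω := by
      filter_upwards [hGle] with ω h using sub_nonneg.mpr (h 0)
    have hterm : ∀ n, ∫⁻ ω, ENNReal.ofReal (g (e n) ω - g (e 0) ω) ∂μ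
        ≤ ENNReal.ofReal (c₀ - ∫ ω, g (e 0) ω ∂μ) := by
      intro n
      have hnn' : 0 ≤ᵐ[μ] fun ω => g (e n) ω - g (e 0) ω := by
        filter_upwards [haemono] with ω h using sub_nonneg.mpr (h (Nat.zero_le n))
      rw [← ofReal_integral_eq_lintegral_ofReal
          (f := fun ω => g (e n) ω - g (e 0) ω) ((hint _).sub (hint _)) hnn',
        integral_sub (hint _) (hint _)]
      exact ENNReal.ofReal_le_ofReal (by linarith [hle_c₀ (e n)])
    have hfat : ∫⁻ ω, ENNReal.ofReal (G ω - g (e 0) ω) ∂μ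
        ≤ ENNReal.ofReal (c₀ - ∫ ω, g (e 0) ω ∂μ) := by
      have hlim' : ∀ᵐ ω ∂μ, Tendsto (fun n => ENNReal.ofReal (g (e n) ω - g (e 0) ω)) atTop
          (𝓝 (ENNReal.ofReal (G ω - g (e 0) ω))) := by
        filter_upwards [hGlim] with ω h
        exact (ENNReal.continuous_ofReal.tendsto _).comp (h.sub_const _)
      calc ∫⁻ ω, ENNReal.ofReal (G ω - g (e 0) ω) ∂μ
          = ∫⁻ ω, liminf (fun n => ENNReal.ofReal (g (e n) ω - g (e 0) ω)) atTop ∂μ := by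
            refine lintegral_congr_ae ?_
            filter_upwards [hlim'] with ω h using h.liminf_eq.symm
        _ ≤ liminf (fun n => ∫⁻ ω, ENNReal.ofReal (g (e n) ω - g (e 0) ω) ∂μ) atTop :=
            lintegral_liminf_le' (fun n => ((hgm _).sub (hgm _)).ennreal_ofReal.aemeasurable)
        _ ≤ liminf (fun _ : ℕ => ENNReal.ofReal (c₀ - ∫ ω, g (e 0) ω ∂μ)) atTop :=
            liminf_le_liminf (Eventually.of_forall hterm)
        _ = ENNReal.ofReal (c₀ - ∫ ω, g (e 0) ω ∂μ) := liminf_const _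
    have hDint : Integrable (fun ω => G ω - g (e 0) ω) μ := by
      refine ⟨(hGmeas.sub (hgm _)).aestronglyMeasurable, ?_⟩
      rw [hasFiniteIntegral_iff_norm]
      have : ∫⁻ ω, ENNReal.ofReal ‖G ω - g (e 0) ω‖ ∂μ
          = ∫⁻ ω, ENNReal.ofReal (G ω - g (e 0) ω) ∂μ := by
        refine lintegral_congr_ae ?_
        filter_upwards [hnn] with ω h
        rw [Real.norm_eq_abs, abs_of_nonneg h]
      rw [this]
      exact lt_of_le_of_lt hfat ENNReal.ofReal_lt_top
    have : G = fun ω => (G ω - g (e 0) ω) + g (e 0) ω := by funext ω; ring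
    rw [this]
    exact hDint.add (hint _)
  -- G is an upper bound of the whole family
  have hgiG : ∀ i, g i ≤ᵐ[μ] G := by
    intro i
    set h : ℕ → Ω → ℝ := fun n ω => max (g (e n) ω) (g i ω) with hh
    have hhint : ∀ n, Integrable (h n) μ := by
      intro n
      have := (hint (e n)).sup (hint i)
      simpa [hh, Pi.sup_def] using this
    have hmax : ∀ n, h n ≤ᵐ[μ] g (k (e n) i) := by
      intro n
      filter_upwards [hk1 (e n) i, hk2 (e n) i] with ω h1 h2
      exact max_le h1 h2
    have hIh : ∀ n, ∫ ω, h n ω ∂μ ≤ c₀ :=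
      fun n => (integral_mono_ae (hhint n) (hint _) (hmax n)).trans (hle_c₀ _)
    have hIlow : ∀ n, ∫ ω, g (e n) ω ∂μ ≤ ∫ ω, h n ω ∂μ := by
      intro n
      refine integral_mono_ae (hint _) (hhint n) (Eventually.of_forall fun ω => le_max_left _ _)
    have hnn : ∀ n, 0 ≤ᵐ[μ] fun ω => h n ω - g (e n) ω :=
      fun n => Eventually.of_forall fun ω => sub_nonneg.mpr (le_max_left _ _)
    have hIdiff : ∀ n, ∫⁻ ω, ENNReal.ofReal (h n ω - g (e n) ω) ∂μ
        = ENNReal.ofReal (∫ ω, h n ω ∂μ - ∫ ω, g (e n) ω ∂μ) := by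
      intro n
      rw [← ofReal_integral_eq_lintegral_ofReal
          (f := fun ω => h n ω - g (e n) ω) ((hhint n).sub (hint _)) (hnn n),
        integral_sub (hhint n) (hint _)]
    have hL : Tendsto (fun n => ENNReal.ofReal (∫ ω, h n ω ∂μ - ∫ ω, g (e n) ω ∂μ))
        atTop (𝓝 0) := by
      have hr : Tendsto (fun n => ∫ ω, h n ω ∂μ - ∫ ω, g (e n) ω ∂μ) atTop (𝓝 0) := by
        refine tendsto_of_tendsto_of_tendsto_of_le_of_le
          (g := fun _ : ℕ => (0:ℝ)) (h := fun n => c₀ - ∫ ω, g (e n) ω ∂μ)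
          tendsto_const_nhds ?_ (fun n => sub_nonneg.mpr (hIlow n))
          (fun n => by simpa using sub_le_sub_right (hIh n) (∫ ω, g (e n) ω ∂μ))
        simpa using (tendsto_const_nhds (x := c₀) (f := atTop)).sub hItend
      simpa [Function.comp_def] using (ENNReal.continuous_ofReal.tendsto 0).comp hr
    have hlim' : ∀ᵐ ω ∂μ, Tendsto (fun n => ENNReal.ofReal (h n ω - g (e n) ω)) atTop
        (𝓝 (ENNReal.ofReal (max (G ω) (g i ω) - G ω))) := by
      filter_upwards [hGlim] with ω hω
      exact (ENNReal.continuous_ofReal.tendsto _).comp ((hω.max tendsto_const_nhds).sub hω)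
    have hfat : ∫⁻ ω, ENNReal.ofReal (max (G ω) (g i ω) - G ω) ∂μ = 0 := by
      refine le_antisymm ?_ zero_le
      calc ∫⁻ ω, ENNReal.ofReal (max (G ω) (g i ω) - G ω) ∂μ
          = ∫⁻ ω, liminf (fun n => ENNReal.ofReal (h n ω - g (e n) ω)) atTop ∂μ := by
            refine lintegral_congr_ae ?_
            filter_upwards [hlim'] with ω hω using hω.liminf_eq.symm
        _ ≤ liminf (fun n => ∫⁻ ω, ENNReal.ofReal (h n ω - g (e n) ω) ∂μ) atTop :=
            lintegral_liminf_le'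
              (fun n => (((hgm _).max (hgm i)).sub (hgm _)).ennreal_ofReal.aemeasurable)
        _ = liminf (fun n => ENNReal.ofReal (∫ ω, h n ω ∂μ - ∫ ω, g (e n) ω ∂μ)) atTop := by
            simp_rw [hIdiff]
        _ = 0 := hL.liminf_eq
    have hae0 := (lintegral_eq_zero_iff'
      (((hGmeas.max (hgm i)).sub hGmeas).ennreal_ofReal.aemeasurable)).mp hfat
    filter_upwards [hae0] with ω hω
    have : max (G ω) (g i ω) - G ω ≤ 0 := by
      simpa using ENNReal.ofReal_eq_zero.mp hω
    have := le_trans (le_max_right (G ω) (g i ω)) (by linarith : max (G ω) (g i ω) ≤ G ω)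
    exact this
  have hZG : Z ≤ᵐ[μ] G := hsup.2 G hgiG
  have hZeq : Z =ᵐ[μ] G := hZG.antisymm hGZ
  refine ⟨e, G, hGint, hZeq, haemono, ?_⟩
  filter_upwards [hGlim, hZeq] with ω h1 h2
  rw [h2]
  exact h1


/-- Lemma 5.1: let `S` be the Snell envelope of an optional process `L` of class (D) on
`[0,T]`, i.e. `S_α = ess sup_{τ ∈ T_α} E(L_τ | F_α)` for every stopping time `α ≤ T`,
and assume `S ≥ 0`.  Then for all stopping times `α ≤ σ ≤ T`,
`S_α = ess sup_{τ ∈ T_{α,σ}} E(L_τ 1_{τ<σ} + S_σ 1_{τ=σ} | F_α)`. -/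
theorem snell_envelope_restart
    (ℱ : Filtration ℝ m0) (μ : Measure Ω) [IsProbabilityMeasure μ]
    (T : Ω → ℝ) (hT : IsStoppingTime ℱ (fun ω => ((T) ω : WithTop ℝ))) (hT0 : ∀ ω, 0 ≤ T ω)
    (L S : ℝ → Ω → ℝ)
    (hLD : ClassD ℱ μ T L)
    (hSpos : ∀ t ω, 0 ≤ S t ω)
    (hSnell : ∀ (α : Ω → ℝ) (hα : IsStoppingTime ℱ (fun ω => ((α) ω : WithTop ℝ))), (∀ ω, α ω ∈ Set.Icc 0 (T ω)) →
      IsEssSupOf μ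
        (fun τ : {τ : Ω → ℝ // IsStoppingTime ℱ (fun ω => ((τ) ω : WithTop ℝ)) ∧ ∀ ω, τ ω ∈ Set.Icc (α ω) (T ω)} =>
          μ[stoppedValue L (fun ω => ((τ.1) ω : WithTop ℝ)) | hα.measurableSpace])
        (stoppedValue S (fun ω => ((α) ω : WithTop ℝ)))) :
    ∀ (α σ : Ω → ℝ) (hα : IsStoppingTime ℱ (fun ω => ((α) ω : WithTop ℝ))) (hσ : IsStoppingTime ℱ (fun ω => ((σ) ω : WithTop ℝ))),
      (∀ ω, α ω ∈ Set.Icc 0 (σ ω)) → (∀ ω, σ ω ∈ Set.Icc 0 (T ω)) →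
      IsEssSupOf μ
        (fun τ : {τ : Ω → ℝ // IsStoppingTime ℱ (fun ω => ((τ) ω : WithTop ℝ)) ∧ ∀ ω, τ ω ∈ Set.Icc (α ω) (σ ω)} =>
          μ[(fun ω => (if τ.1 ω < σ ω then stoppedValue L (fun ω => ((τ.1) ω : WithTop ℝ)) ω else 0)
              + (if τ.1 ω = σ ω then stoppedValue S (fun ω => ((σ) ω : WithTop ℝ)) ω else 0)) | hα.measurableSpace])
        (stoppedValue S (fun ω => ((α) ω : WithTop ℝ))) := by
  classical
  intro α σ hα hσ hασ hσT
  have hαβ : ∀ ω, α ω ≤ σ ω := fun ω => (hασ ω).2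
  have hα0T : ∀ ω, α ω ∈ Set.Icc 0 (T ω) :=
    fun ω => ⟨(hασ ω).1, le_trans (hασ ω).2 (hσT ω).2⟩
  have hmle : hα.measurableSpace ≤ hσ.measurableSpace :=
    IsStoppingTime.measurableSpace_mono hα hσ (fun ω => WithTop.coe_le_coe.mpr (hαβ ω))
  have hσle : hσ.measurableSpace ≤ m0 := hσ.measurableSpace_le
  have hαle : hα.measurableSpace ≤ m0 := hα.measurableSpace_le
  obtain ⟨hmeasD, -, C, hC⟩ := hLD
  have hLint : ∀ (τ : Ω → ℝ), IsStoppingTime ℱ (fun ω => ((τ) ω : WithTop ℝ)) → (∀ ω, τ ω ∈ Set.Icc 0 (T ω)) →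
      Integrable (stoppedValue L (fun ω => ((τ) ω : WithTop ℝ))) μ := by
    intro τ hτ hτT
    exact memLp_one_iff_integrable.mp
      ⟨hmeasD ⟨τ, hτ, hτT⟩, (hC ⟨τ, hτ, hτT⟩).trans_lt ENNReal.coe_lt_top⟩
  -- the family over [σ, T]
  haveI : Nonempty {τ : Ω → ℝ // IsStoppingTime ℱ (fun ω => ((τ) ω : WithTop ℝ)) ∧ ∀ ω, τ ω ∈ Set.Icc (σ ω) (T ω)} :=
    ⟨⟨σ, hσ, fun ω => ⟨le_rfl, (hσT ω).2⟩⟩⟩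
  set gσ : {τ : Ω → ℝ // IsStoppingTime ℱ (fun ω => ((τ) ω : WithTop ℝ)) ∧ ∀ ω, τ ω ∈ Set.Icc (σ ω) (T ω)} → Ω → ℝ :=
    fun j => μ[stoppedValue L (fun ω => ((j.1) ω : WithTop ℝ)) | hσ.measurableSpace] with hgσdef
  have hsupσ : IsEssSupOf μ gσ (stoppedValue S (fun ω => ((σ) ω : WithTop ℝ))) := hSnell σ hσ hσT
  have hrangeT : ∀ j : {τ : Ω → ℝ // IsStoppingTime ℱ (fun ω => ((τ) ω : WithTop ℝ)) ∧ ∀ ω, τ ω ∈ Set.Icc (σ ω) (T ω)},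
      ∀ ω, j.1 ω ∈ Set.Icc 0 (T ω) :=
    fun j ω => ⟨le_trans (hσT ω).1 (j.2.2 ω).1, (j.2.2 ω).2⟩
  have hgint : ∀ j, Integrable (gσ j) μ := fun j => integrable_condExp
  have hgmeas : ∀ j, Measurable[m0] (gσ j) :=
    fun j => (stronglyMeasurable_condExp.mono hσle).measurable
  have hdir : ∀ i j, ∃ k, gσ i ≤ᵐ[μ] gσ k ∧ gσ j ≤ᵐ[μ] gσ k := by
    intro i j
    set B : Set Ω := {ω | gσ i ω ≤ gσ j ω} with hBdef
    have hBσ : MeasurableSet[hσ.measurableSpace] B := by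
      have h1 : StronglyMeasurable[hσ.measurableSpace] (gσ i) := stronglyMeasurable_condExp
      have h2 : StronglyMeasurable[hσ.measurableSpace] (gσ j) := stronglyMeasurable_condExp
      exact measurableSet_le h1.measurable h2.measurable
    have hBj : MeasurableSet[j.2.1.measurableSpace] B :=
      (IsStoppingTime.measurableSpace_mono hσ j.2.1 fun ω => WithTop.coe_le_coe.mpr (j.2.2 ω).1) _ hBσ
    have hBci : MeasurableSet[i.2.1.measurableSpace] Bᶜ :=
      (IsStoppingTime.measurableSpace_mono hσ i.2.1 fun ω => WithTop.coe_le_coe.mpr (i.2.2 ω).1) _ hBσ.compl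
    have hτkst : IsStoppingTime ℱ (fun ω => ((if ω ∈ B then j.1 ω else i.1 ω : ℝ) : WithTop ℝ)) :=
      isStoppingTime_ite' j.2.1 i.2.1 hBj hBci
    have hτkrange : ∀ ω, (if ω ∈ B then j.1 ω else i.1 ω) ∈ Set.Icc (σ ω) (T ω) := by
      intro ω; by_cases hω : ω ∈ B
      · rw [if_pos hω]; exact j.2.2 ω
      · rw [if_neg hω]; exact i.2.2 ω
    have hintj : Integrable (stoppedValue L (fun ω => ((j.1) ω : WithTop ℝ))) μ := hLint _ j.2.1 (hrangeT j)
    have hinti : Integrable (stoppedValue L (fun ω => ((i.1) ω : WithTop ℝ))) μ := hLint _ i.2.1 (hrangeT i)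
    have hBm0 : MeasurableSet[m0] B := hσle _ hBσ
    have hval : stoppedValue L (fun ω => ((if ω ∈ B then j.1 ω else i.1 ω : ℝ) : WithTop ℝ))
        = fun ω => B.indicator (stoppedValue L (fun ω => ((j.1) ω : WithTop ℝ))) ω + Bᶜ.indicator (stoppedValue L (fun ω => ((i.1) ω : WithTop ℝ))) ω := by
      funext ω
      by_cases hω : ω ∈ B
      · have hω' : ω ∉ Bᶜ := fun h => h hω
        simp only [stoppedValue, if_pos hω, Set.indicator_of_mem hω,
          Set.indicator_of_notMem hω', add_zero]
      · have hω' : ω ∈ Bᶜ := hω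
        simp only [stoppedValue, if_neg hω, Set.indicator_of_notMem hω,
          Set.indicator_of_mem hω', zero_add]
    have hcond : gσ ⟨_, hτkst, hτkrange⟩ =ᵐ[μ]
        fun ω => B.indicator (gσ j) ω + Bᶜ.indicator (gσ i) ω := by
      have h1 : gσ ⟨_, hτkst, hτkrange⟩ =ᵐ[μ]
          μ[B.indicator (stoppedValue L (fun ω => ((j.1) ω : WithTop ℝ)))|hσ.measurableSpace]
            + μ[Bᶜ.indicator (stoppedValue L (fun ω => ((i.1) ω : WithTop ℝ)))|hσ.measurableSpace] := by
        have hadd := condExp_add (m := hσ.measurableSpace) (μ := μ)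
          (hintj.indicator hBm0) (hinti.indicator hBm0.compl)
        refine EventuallyEq.trans (EventuallyEq.of_eq ?_) hadd
        exact congrArg (fun f => μ[f|hσ.measurableSpace]) hval
      refine h1.trans ?_
      have h2 := condExp_indicator (m := hσ.measurableSpace) hintj hBσ
      have h3 := condExp_indicator (m := hσ.measurableSpace) hinti hBσ.compl
      filter_upwards [h2, h3] with ω hω2 hω3
      simp only [Pi.add_apply, hω2, hω3]
      rfl
    refine ⟨⟨_, hτkst, hτkrange⟩, ?_, ?_⟩
    · filter_upwards [hcond] with ω hω
      rw [hω]
      by_cases hωB : ω ∈ B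
      · have hω' : ω ∉ Bᶜ := fun h => h hωB
        rw [Set.indicator_of_mem hωB, Set.indicator_of_notMem hω', add_zero]
        exact hωB
      · have hω' : ω ∈ Bᶜ := hωB
        rw [Set.indicator_of_notMem hωB, Set.indicator_of_mem hω', zero_add]
    · filter_upwards [hcond] with ω hω
      rw [hω]
      by_cases hωB : ω ∈ B
      · have hω' : ω ∉ Bᶜ := fun h => h hωB
        rw [Set.indicator_of_mem hωB, Set.indicator_of_notMem hω', add_zero]
      · have hω' : ω ∈ Bᶜ := hωB
        rw [Set.indicator_of_notMem hωB, Set.indicator_of_mem hω', zero_add]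
        exact (not_le.mp hωB).le
  have hbdd : ∀ j, ∫ ω, gσ j ω ∂μ ≤ (C : ℝ) := by
    intro j
    have h1 : ∫ ω, gσ j ω ∂μ = ∫ ω, stoppedValue L (fun ω => ((j.1) ω : WithTop ℝ)) ω ∂μ := integral_condExp hσle
    have h2 : ∫ ω, stoppedValue L (fun ω => ((j.1) ω : WithTop ℝ)) ω ∂μ ≤ ∫ ω, ‖stoppedValue L (fun ω => ((j.1) ω : WithTop ℝ)) ω‖ ∂μ := by
      refine le_trans (le_abs_self _) ?_
      rw [← Real.norm_eq_abs]
      exact norm_integral_le_integral_norm _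
    have h3 : ENNReal.ofReal (∫ ω, ‖stoppedValue L (fun ω => ((j.1) ω : WithTop ℝ)) ω‖ ∂μ)
        = eLpNorm (stoppedValue L (fun ω => ((j.1) ω : WithTop ℝ))) 1 μ := by
      rw [eLpNorm_one_eq_lintegral_enorm,
        ofReal_integral_norm_eq_lintegral_enorm (hLint _ j.2.1 (hrangeT j))]
    have h4 : eLpNorm (stoppedValue L (fun ω => ((j.1) ω : WithTop ℝ))) 1 μ ≤ (C : ℝ≥0∞) := hC ⟨j.1, j.2.1, hrangeT j⟩
    have h5 : ENNReal.ofReal (∫ ω, ‖stoppedValue L (fun ω => ((j.1) ω : WithTop ℝ)) ω‖ ∂μ) ≤ (C : ℝ≥0∞) := h3 ▸ h4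
    have h6 := (ENNReal.ofReal_le_iff_le_toReal (by simp)).mp h5
    simp only [ENNReal.coe_toReal] at h6
    rw [h1]
    exact h2.trans h6
  obtain ⟨e, G, hGint, hZeq, hemono, helim⟩ :=
    exists_monotone_seq_of_isEssSupOf hgint hgmeas hdir hbdd hsupσ
  constructor
  · -- upper bound part
    rintro ⟨τ, hτ, hτσ⟩
    show μ[(fun ω => (if τ ω < σ ω then stoppedValue L (fun ω => ((τ) ω : WithTop ℝ)) ω else 0)
        + (if τ ω = σ ω then stoppedValue S (fun ω => ((σ) ω : WithTop ℝ)) ω else 0))|hα.measurableSpace]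
      ≤ᵐ[μ] stoppedValue S (fun ω => ((α) ω : WithTop ℝ))
    have hτle : ∀ ω, τ ω ≤ σ ω := fun ω => (hτσ ω).2
    set A : Set Ω := {ω | σ ω ≤ τ ω} with hAdef
    have hAσ : MeasurableSet[hσ.measurableSpace] A := by
        have := hσ.measurableSet_le_stopping_time hτ; simp only [WithTop.coe_le_coe] at this; exact this
    have hAτ : MeasurableSet[hτ.measurableSpace] A := by
        have := IsStoppingTime.measurableSet_stopping_time_le hσ hτ; simp only [WithTop.coe_le_coe] at this; exact this
    have hAm0 : MeasurableSet[m0] A := hσle _ hAσ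
    have hLτint : Integrable (stoppedValue L (fun ω => ((τ) ω : WithTop ℝ))) μ :=
      hLint τ hτ fun ω => ⟨(hα0T ω).1.trans (hτσ ω).1, (hτle ω).trans (hσT ω).2⟩
    have hLenint : ∀ n, Integrable (stoppedValue L (fun ω => (((e n).1) ω : WithTop ℝ))) μ :=
      fun n => hLint _ (e n).2.1 (hrangeT (e n))
    -- the auxiliary stopping times
    have hρst : ∀ n, IsStoppingTime ℱ (fun ω => ((if ω ∈ Aᶜ then τ ω else (e n).1 ω : ℝ) : WithTop ℝ)) := by
      intro n
      refine isStoppingTime_ite' hτ (e n).2.1 hAτ.compl ?_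
      rw [compl_compl]
      exact (IsStoppingTime.measurableSpace_mono hσ (e n).2.1 fun ω => WithTop.coe_le_coe.mpr ((e n).2.2 ω).1) _ hAσ
    have hρrange : ∀ n, ∀ ω, (if ω ∈ Aᶜ then τ ω else (e n).1 ω) ∈ Set.Icc (α ω) (T ω) := by
      intro n ω
      by_cases hω : ω ∈ Aᶜ
      · rw [if_pos hω]
        exact ⟨(hτσ ω).1, (hτle ω).trans (hσT ω).2⟩
      · rw [if_neg hω]
        exact ⟨(hαβ ω).trans ((e n).2.2 ω).1, ((e n).2.2 ω).2⟩
    have hρle : ∀ n,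
        μ[stoppedValue L (fun ω => ((if ω ∈ Aᶜ then τ ω else (e n).1 ω : ℝ) : WithTop ℝ))|hα.measurableSpace]
          ≤ᵐ[μ] stoppedValue S (fun ω => ((α) ω : WithTop ℝ)) :=
      fun n => (hSnell α hα hα0T).1 ⟨_, hρst n, hρrange n⟩
    have hdecomp : ∀ n, stoppedValue L (fun ω => ((if ω ∈ Aᶜ then τ ω else (e n).1 ω : ℝ) : WithTop ℝ))
        = fun ω => Aᶜ.indicator (stoppedValue L (fun ω => ((τ) ω : WithTop ℝ))) ω
            + A.indicator (stoppedValue L (fun ω => (((e n).1) ω : WithTop ℝ))) ω := by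
      intro n; funext ω
      by_cases hω : ω ∈ A
      · have hω' : ω ∉ Aᶜ := fun h => h hω
        simp only [stoppedValue, if_neg hω', Set.indicator_of_mem hω,
          Set.indicator_of_notMem hω', zero_add]
      · have hω' : ω ∈ Aᶜ := hω
        simp only [stoppedValue, if_pos hω', Set.indicator_of_notMem hω,
          Set.indicator_of_mem hω', add_zero]
    have htower : ∀ n, μ[A.indicator (stoppedValue L (fun ω => (((e n).1) ω : WithTop ℝ)))|hα.measurableSpace]
        =ᵐ[μ] μ[A.indicator (gσ (e n))|hα.measurableSpace] := by
      intro n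
      refine EventuallyEq.trans ?_ (condExp_congr_ae
        (condExp_indicator (m := hσ.measurableSpace) (hLenint n) hAσ))
      exact (condExp_condExp_of_le hmle hσle).symm
    have hfn_le : ∀ n,
        μ[(fun ω => Aᶜ.indicator (stoppedValue L (fun ω => ((τ) ω : WithTop ℝ))) ω + A.indicator (gσ (e n)) ω)|hα.measurableSpace]
          ≤ᵐ[μ] stoppedValue S (fun ω => ((α) ω : WithTop ℝ)) := by
      intro n
      have hint1 : Integrable (Aᶜ.indicator (stoppedValue L (fun ω => ((τ) ω : WithTop ℝ)))) μ :=
        hLτint.indicator hAm0.compl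
      have hint2 : Integrable (A.indicator (stoppedValue L (fun ω => (((e n).1) ω : WithTop ℝ)))) μ :=
        (hLenint n).indicator hAm0
      have hint3 : Integrable (A.indicator (gσ (e n))) μ := (hgint (e n)).indicator hAm0
      have h1 :
          μ[(fun ω => Aᶜ.indicator (stoppedValue L (fun ω => ((τ) ω : WithTop ℝ))) ω + A.indicator (gσ (e n)) ω)|hα.measurableSpace]
          =ᵐ[μ] μ[Aᶜ.indicator (stoppedValue L (fun ω => ((τ) ω : WithTop ℝ)))|hα.measurableSpace]
            + μ[A.indicator (gσ (e n))|hα.measurableSpace] :=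
        condExp_add (m := hα.measurableSpace) hint1 hint3
      have h2 :
          μ[stoppedValue L (fun ω => ((if ω ∈ Aᶜ then τ ω else (e n).1 ω : ℝ) : WithTop ℝ))|hα.measurableSpace]
          =ᵐ[μ] μ[Aᶜ.indicator (stoppedValue L (fun ω => ((τ) ω : WithTop ℝ)))|hα.measurableSpace]
            + μ[A.indicator (stoppedValue L (fun ω => (((e n).1) ω : WithTop ℝ)))|hα.measurableSpace] := by
        refine EventuallyEq.trans (EventuallyEq.of_eq
          (congrArg (fun f => μ[f|hα.measurableSpace]) (hdecomp n))) ?_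
        exact condExp_add (m := hα.measurableSpace) hint1 hint2
      have h3 := (htower n).symm
      refine EventuallyLE.congr (hρle n) ?_ EventuallyEq.rfl
      refine h2.trans (EventuallyEq.trans ?_ h1.symm)
      filter_upwards [htower n] with ω hω
      simp only [Pi.add_apply, hω]
    -- pass to the limit
    have hFle :
        μ[(fun ω => Aᶜ.indicator (stoppedValue L (fun ω => ((τ) ω : WithTop ℝ))) ω + A.indicator G ω)|hα.measurableSpace]
          ≤ᵐ[μ] stoppedValue S (fun ω => ((α) ω : WithTop ℝ)) := by
      refine condexp_le_of_monotone_limit hαle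
        (f := fun n ω => Aᶜ.indicator (stoppedValue L (fun ω => ((τ) ω : WithTop ℝ))) ω + A.indicator (gσ (e n)) ω)
        (fun n => (hLτint.indicator hAm0.compl).add ((hgint (e n)).indicator hAm0))
        ((hLτint.indicator hAm0.compl).add (hGint.indicator hAm0)) ?_ ?_ hfn_le
      · filter_upwards [hemono] with ω hω
        intro a b hab
        by_cases hωA : ω ∈ A
        · simp only [Set.indicator_of_mem hωA]
          exact add_le_add_right (hω hab) _
        · simp only [Set.indicator_of_notMem hωA, le_refl]
      · filter_upwards [helim, hZeq] with ω h1 h2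
        by_cases hωA : ω ∈ A
        · simp only [Set.indicator_of_mem hωA]
          refine Tendsto.const_add _ ?_
          rw [← h2]
          exact h1
        · simp only [Set.indicator_of_notMem hωA]
          simpa using tendsto_const_nhds
    refine EventuallyLE.congr hFle (condExp_congr_ae ?_) EventuallyEq.rfl
    filter_upwards [hZeq] with ω hω
    by_cases hωA : ω ∈ A
    · have h1 : ¬ τ ω < σ ω := not_lt.mpr hωA
      have h2 : τ ω = σ ω := le_antisymm (hτle ω) hωA
      have hω' : ω ∉ Aᶜ := fun h => h hωA
      rw [Set.indicator_of_notMem hω', Set.indicator_of_mem hωA, if_neg h1, if_pos h2,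
        zero_add, zero_add, hω]
    · have h1 : τ ω < σ ω := not_le.mp hωA
      have h2 : ¬ τ ω = σ ω := h1.ne
      have hω' : ω ∈ Aᶜ := hωA
      rw [Set.indicator_of_notMem hωA, Set.indicator_of_mem hω', if_pos h1, if_neg h2,
        add_zero]
  · -- minimality part
    intro W hW
    refine (hSnell α hα hα0T).2 W ?_
    rintro ⟨τ, hτ, hτT⟩
    show μ[stoppedValue L (fun ω => ((τ) ω : WithTop ℝ))|hα.measurableSpace] ≤ᵐ[μ] W
    set τ₁ : Ω → ℝ := fun ω => min (τ ω) (σ ω) with hτ₁def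
    have hτ₁ : IsStoppingTime ℱ (fun ω => ((τ₁) ω : WithTop ℝ)) := by
      have := hτ.min hσ; simp only [← WithTop.coe_min] at this; exact this
    have hτ₁range : ∀ ω, τ₁ ω ∈ Set.Icc (α ω) (σ ω) :=
      fun ω => ⟨le_min (hτT ω).1 (hαβ ω), min_le_right _ _⟩
    set τ₂ : Ω → ℝ := fun ω => max (τ ω) (σ ω) with hτ₂def
    have hτ₂ : IsStoppingTime ℱ (fun ω => ((τ₂) ω : WithTop ℝ)) := by
      have := hτ.max hσ; simp only [← WithTop.coe_max] at this; exact this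
    have hτ₂range : ∀ ω, τ₂ ω ∈ Set.Icc (σ ω) (T ω) :=
      fun ω => ⟨le_max_right _ _, max_le (hτT ω).2 (hσT ω).2⟩
    set B : Set Ω := {ω | σ ω ≤ τ ω} with hBdef
    have hBσ : MeasurableSet[hσ.measurableSpace] B := by
        have := hσ.measurableSet_le_stopping_time hτ; simp only [WithTop.coe_le_coe] at this; exact this
    have hBm0 : MeasurableSet[m0] B := hσle _ hBσ
    have hεG : gσ ⟨τ₂, hτ₂, hτ₂range⟩ ≤ᵐ[μ] G :=
      (hsupσ.1 ⟨τ₂, hτ₂, hτ₂range⟩).trans hZeq.le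
    have hLτint : Integrable (stoppedValue L (fun ω => ((τ) ω : WithTop ℝ))) μ :=
      hLint τ hτ fun ω => ⟨(hα0T ω).1.trans (hτT ω).1, (hτT ω).2⟩
    have hLτ₂int : Integrable (stoppedValue L (fun ω => ((τ₂) ω : WithTop ℝ))) μ :=
      hLint τ₂ hτ₂ (hrangeT ⟨τ₂, hτ₂, hτ₂range⟩)
    have hint1 : Integrable (Bᶜ.indicator (stoppedValue L (fun ω => ((τ) ω : WithTop ℝ)))) μ :=
      hLτint.indicator hBm0.compl
    have hint2 : Integrable (B.indicator (stoppedValue L (fun ω => ((τ₂) ω : WithTop ℝ)))) μ := hLτ₂int.indicator hBm0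
    have hint3 : Integrable (B.indicator (gσ ⟨τ₂, hτ₂, hτ₂range⟩)) μ :=
      (hgint _).indicator hBm0
    have hint4 : Integrable (B.indicator G) μ := hGint.indicator hBm0
    have hdecomp : stoppedValue L (fun ω => ((τ) ω : WithTop ℝ))
        = fun ω => Bᶜ.indicator (stoppedValue L (fun ω => ((τ) ω : WithTop ℝ))) ω + B.indicator (stoppedValue L (fun ω => ((τ₂) ω : WithTop ℝ))) ω := by
      funext ω
      by_cases hω : ω ∈ B
      · have hω' : ω ∉ Bᶜ := fun h => h hω
        have h2 : τ₂ ω = τ ω := max_eq_left hω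
        simp only [stoppedValue, Set.indicator_of_mem hω, Set.indicator_of_notMem hω',
          zero_add, h2]
      · have hω' : ω ∈ Bᶜ := hω
        simp only [stoppedValue, Set.indicator_of_notMem hω, Set.indicator_of_mem hω',
          add_zero]
    have htower : μ[B.indicator (stoppedValue L (fun ω => ((τ₂) ω : WithTop ℝ)))|hα.measurableSpace]
        =ᵐ[μ] μ[B.indicator (gσ ⟨τ₂, hτ₂, hτ₂range⟩)|hα.measurableSpace] := by
      refine EventuallyEq.trans ?_ (condExp_congr_ae
        (condExp_indicator (m := hσ.measurableSpace) hLτ₂int hBσ))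
      exact (condExp_condExp_of_le hmle hσle).symm
    have hmono' : (fun ω => Bᶜ.indicator (stoppedValue L (fun ω => ((τ) ω : WithTop ℝ))) ω + B.indicator (gσ ⟨τ₂, hτ₂, hτ₂range⟩) ω)
        ≤ᵐ[μ] fun ω => Bᶜ.indicator (stoppedValue L (fun ω => ((τ) ω : WithTop ℝ))) ω + B.indicator G ω := by
      filter_upwards [hεG] with ω h
      refine add_le_add_right ?_ _
      by_cases hω : ω ∈ B
      · simpa only [Set.indicator_of_mem hω] using h
      · simp only [Set.indicator_of_notMem hω, le_refl]
    have hchain : μ[stoppedValue L (fun ω => ((τ) ω : WithTop ℝ))|hα.measurableSpace] ≤ᵐ[μ]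
        μ[(fun ω => Bᶜ.indicator (stoppedValue L (fun ω => ((τ) ω : WithTop ℝ))) ω + B.indicator G ω)|hα.measurableSpace]
        := by
      have h1 : μ[stoppedValue L (fun ω => ((τ) ω : WithTop ℝ))|hα.measurableSpace]
          =ᵐ[μ] μ[Bᶜ.indicator (stoppedValue L (fun ω => ((τ) ω : WithTop ℝ)))|hα.measurableSpace]
            + μ[B.indicator (stoppedValue L (fun ω => ((τ₂) ω : WithTop ℝ)))|hα.measurableSpace] := by
        refine EventuallyEq.trans (EventuallyEq.of_eq
          (congrArg (fun f => μ[f|hα.measurableSpace]) hdecomp)) ?_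
        exact condExp_add (m := hα.measurableSpace) hint1 hint2
      have h2 : μ[(fun ω => Bᶜ.indicator (stoppedValue L (fun ω => ((τ) ω : WithTop ℝ))) ω + B.indicator (gσ ⟨τ₂, hτ₂, hτ₂range⟩) ω)|hα.measurableSpace]
          =ᵐ[μ] μ[Bᶜ.indicator (stoppedValue L (fun ω => ((τ) ω : WithTop ℝ)))|hα.measurableSpace]
            + μ[B.indicator (gσ ⟨τ₂, hτ₂, hτ₂range⟩)|hα.measurableSpace] :=
        condExp_add (m := hα.measurableSpace) hint1 hint3
      have h3 : μ[stoppedValue L (fun ω => ((τ) ω : WithTop ℝ))|hα.measurableSpace] =ᵐ[μ]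
          μ[(fun ω => Bᶜ.indicator (stoppedValue L (fun ω => ((τ) ω : WithTop ℝ))) ω + B.indicator (gσ ⟨τ₂, hτ₂, hτ₂range⟩) ω)|hα.measurableSpace] := by
        refine h1.trans (EventuallyEq.trans ?_ h2.symm)
        filter_upwards [htower] with ω hω
        simp only [Pi.add_apply, hω]
      refine h3.le.trans ?_
      exact condExp_mono (hint1.add hint3) (hint1.add hint4) hmono'
    refine hchain.trans ?_
    have hGS : (fun ω => Bᶜ.indicator (stoppedValue L (fun ω => ((τ) ω : WithTop ℝ))) ω + B.indicator G ω)
        =ᵐ[μ] fun ω => (if τ₁ ω < σ ω then stoppedValue L (fun ω => ((τ₁) ω : WithTop ℝ)) ω else 0)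
          + (if τ₁ ω = σ ω then stoppedValue S (fun ω => ((σ) ω : WithTop ℝ)) ω else 0) := by
      filter_upwards [hZeq] with ω hω
      by_cases hωB : ω ∈ B
      · have hle' : σ ω ≤ τ ω := hωB
        have h1 : τ₁ ω = σ ω := min_eq_right hle'
        have h2 : ¬ τ₁ ω < σ ω := by rw [h1]; exact lt_irrefl _
        have hω' : ω ∉ Bᶜ := fun h => h hωB
        rw [Set.indicator_of_notMem hω', Set.indicator_of_mem hωB, if_neg h2, if_pos h1,
          zero_add, zero_add, hω]
      · have hlt : τ ω < σ ω := not_le.mp hωB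
        have h1 : τ₁ ω = τ ω := min_eq_left hlt.le
        have h2 : τ₁ ω < σ ω := by rw [h1]; exact hlt
        have h3 : ¬ τ₁ ω = σ ω := h2.ne
        have hω' : ω ∈ Bᶜ := hωB
        rw [Set.indicator_of_notMem hωB, Set.indicator_of_mem hω', if_pos h2, if_neg h3,
          add_zero, add_zero]
        simp only [stoppedValue, h1]
    refine (condExp_congr_ae hGS).le.trans ?_
    exact hW ⟨τ₁, hτ₁, hτ₁range⟩


end SnellHelpers

end
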